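/- For W ∈ S(Γ), if □γ ∈ FL±(Γ) and □γ is consistent, then □γ ∈ W if and only if for every W' ∈ S(Γ) with W ∧ ◇W' consistent, γ ∈ W'. -/

import Mathlib

namespace PEDAL

mutual
inductive Form : Type where
  | atom : ℕ → Form
  | bot  : Form
  | neg  : Form → Form
  | or   : Form → Form → Form
  | dia  : Prog → Form → Form
  | nec  : Form → Form
deriving DecidableEq
inductive Prog : Type where
  | atom : ℕ → Prog
  | seq  : Prog → Prog → Prog
  | choice : Prog → Prog → Prog
  | star : Prog → Prog
  | test : Form → Prog
deriving DecidableEq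
end

def Form.impl (A B : Form) : Form := Form.or (Form.neg A) B
def Form.and (A B : Form) : Form := Form.neg (Form.or (Form.neg A) (Form.neg B))
def Form.iff (A B : Form) : Form := (A.impl B).and (B.impl A)
def Form.box (π : Prog) (A : Form) : Form := Form.neg (Form.dia π (Form.neg A))
def Form.diam (A : Form) : Form := Form.neg (Form.nec (Form.neg A))
def Form.top : Form := Form.neg Form.bot

/-- Boolean evaluation treating atoms, diamond- and box-formulas as atoms. -/
def beval (v : Form → Bool) : Form → Bool
  | Form.bot => false
  | Form.neg A => ! beval v A
  | Form.or A B => beval v A || beval v B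
  | A => v A

def Taut (A : Form) : Prop := ∀ v, beval v A = true


structure ModelData (S : Type) where
  vf : ℕ → Set S
  vp : ℕ → S → S → Prop
  Rbox : S → S → Prop

mutual
def Sat {S : Type} (M : ModelData S) (s : S) : Form → Prop
  | Form.atom a => s ∈ M.vf a
  | Form.bot => False
  | Form.neg A => ¬ Sat M s A
  | Form.or A B => Sat M s A ∨ Sat M s B
  | Form.dia π A => ∃ t, Rel M π s t ∧ Sat M t A
  | Form.nec A => ∀ t, M.Rbox s t → Sat M t A
def Rel {S : Type} (M : ModelData S) : Prog → S → S → Prop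
  | Prog.atom p => M.vp p
  | Prog.seq π₁ π₂ => fun s u => ∃ t, Rel M π₁ s t ∧ Rel M π₂ t u
  | Prog.choice π₁ π₂ => fun s t => Rel M π₁ s t ∨ Rel M π₂ s t
  | Prog.star π => Relation.ReflTransGen (Rel M π)
  | Prog.test A => fun s t => s = t ∧ Sat M s A
end
/-- The Hilbert system for PDL. -/
inductive PDLProv : Form → Prop where
  | taut {A : Form} : Taut A → PDLProv A
  | k {π : Prog} {A B : Form} : PDLProv ((Form.box π (A.impl B)).impl ((Form.box π A).impl (Form.box π B)))
  | boxAnd {π : Prog} {A B : Form} : PDLProv ((Form.box π (A.and B)).iff ((Form.box π A).and (Form.box π B)))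
  | choice {π₁ π₂ : Prog} {A : Form} : PDLProv ((Form.box (Prog.choice π₁ π₂) A).iff ((Form.box π₁ A).and (Form.box π₂ A)))
  | test {A B : Form} : PDLProv ((Form.box (Prog.test A) B).iff (A.impl B))
  | seq {π₁ π₂ : Prog} {A : Form} : PDLProv ((Form.box (Prog.seq π₁ π₂) A).iff (Form.box π₁ (Form.box π₂ A)))
  | fixpoint {π : Prog} {A : Form} : PDLProv ((A.and (Form.box π (Form.box (Prog.star π) A))).iff (Form.box (Prog.star π) A))
  | ind {π : Prog} {A : Form} : PDLProv ((A.and (Form.box (Prog.star π) (A.impl (Form.box π A)))).impl (Form.box (Prog.star π) A))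
  | mp {A B : Form} : PDLProv (A.impl B) → PDLProv A → PDLProv B
  | nec {π : Prog} {A : Form} : PDLProv A → PDLProv (Form.box π A)

/-- The Hilbert system for PDL□ : PDL plus an S5 universal modality. -/
inductive PDLBoxProv : Form → Prop where
  | taut {A : Form} : Taut A → PDLBoxProv A
  | k {π : Prog} {A B : Form} : PDLBoxProv ((Form.box π (A.impl B)).impl ((Form.box π A).impl (Form.box π B)))
  | boxAnd {π : Prog} {A B : Form} : PDLBoxProv ((Form.box π (A.and B)).iff ((Form.box π A).and (Form.box π B)))
  | choice {π₁ π₂ : Prog} {A : Form} : PDLBoxProv ((Form.box (Prog.choice π₁ π₂) A).iff ((Form.box π₁ A).and (Form.box π₂ A)))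
  | test {A B : Form} : PDLBoxProv ((Form.box (Prog.test A) B).iff (A.impl B))
  | seq {π₁ π₂ : Prog} {A : Form} : PDLBoxProv ((Form.box (Prog.seq π₁ π₂) A).iff (Form.box π₁ (Form.box π₂ A)))
  | fixpoint {π : Prog} {A : Form} : PDLBoxProv ((A.and (Form.box π (Form.box (Prog.star π) A))).iff (Form.box (Prog.star π) A))
  | ind {π : Prog} {A : Form} : PDLBoxProv ((A.and (Form.box (Prog.star π) (A.impl (Form.box π A)))).impl (Form.box (Prog.star π) A))
  | kbox {A B : Form} : PDLBoxProv ((Form.nec (A.impl B)).impl ((Form.nec A).impl (Form.nec B)))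
  | t {A : Form} : PDLBoxProv ((Form.nec A).impl A)
  | five {A : Form} : PDLBoxProv ((Form.diam A).impl (Form.nec (Form.diam A)))
  | diaBox {π : Prog} {A : Form} : PDLBoxProv ((Form.dia π A).impl (Form.diam A))
  | mp {A B : Form} : PDLBoxProv (A.impl B) → PDLBoxProv A → PDLBoxProv B
  | nec {π : Prog} {A : Form} : PDLBoxProv A → PDLBoxProv (Form.box π A)
  | necBox {A : Form} : PDLBoxProv A → PDLBoxProv (Form.nec A)

/-- A formula is consistent (w.r.t. PDL□). -/
def Consistent (A : Form) : Prop := ¬ PDLBoxProv (A.impl Form.bot)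

/-- A PDL□-model: `Rbox` is an equivalence relation containing every atomic program relation. -/
def ModelData.IsPDLBox {S : Type} (M : ModelData S) : Prop :=
  Equivalence M.Rbox ∧ ∀ p s t, M.vp p s t → M.Rbox s t

/-- The Fischer–Ladner closure of a set of formulas. -/
inductive FL (Γ : Set Form) : Form → Prop where
  | base {γ : Form} : γ ∈ Γ → FL Γ γ
  | neg {γ : Form} : FL Γ (Form.neg γ) → FL Γ γ
  | orl {γ₁ γ₂ : Form} : FL Γ (Form.or γ₁ γ₂) → FL Γ γ₁
  | orr {γ₁ γ₂ : Form} : FL Γ (Form.or γ₁ γ₂) → FL Γ γ₂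
  | dia {π : Prog} {γ : Form} : FL Γ (Form.dia π γ) → FL Γ γ
  | nec {γ : Form} : FL Γ (Form.nec γ) → FL Γ γ
  | test {γ₁ γ₂ : Form} : FL Γ (Form.dia (Prog.test γ₁) γ₂) → FL Γ γ₁
  | seq {π₁ π₂ : Prog} {γ : Form} : FL Γ (Form.dia (Prog.seq π₁ π₂) γ) → FL Γ (Form.dia π₁ (Form.dia π₂ γ))
  | choicel {π₁ π₂ : Prog} {γ : Form} : FL Γ (Form.dia (Prog.choice π₁ π₂) γ) → FL Γ (Form.dia π₁ γ)
  | choicer {π₁ π₂ : Prog} {γ : Form} : FL Γ (Form.dia (Prog.choice π₁ π₂) γ) → FL Γ (Form.dia π₂ γ)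
  | star1 {π : Prog} {γ : Form} : FL Γ (Form.dia (Prog.star π) γ) → FL Γ (Form.dia π γ)
  | star2 {π : Prog} {γ : Form} : FL Γ (Form.dia (Prog.star π) γ) → FL Γ (Form.dia π (Form.dia (Prog.star π) γ))

/-- FL±(Γ) : the Fischer–Ladner closure together with negations of its members. -/
def FLpm (Γ : Set Form) : Set Form := {γ | FL Γ γ} ∪ {γ | ∃ δ, FL Γ δ ∧ γ = Form.neg δ}

/-- Conjunction of a finite set of formulas. -/
noncomputable def conj (W : Finset Form) : Form := W.toList.foldr Form.and Form.top
/-- Disjunction of a finite set of formulas. -/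
noncomputable def disj (W : Finset Form) : Form := W.toList.foldr Form.or Form.bot

/-- S(Γ): maximal consistent subsets of FL±(Γ). -/
def SStates (Γ : Set Form) : Set (Finset Form) :=
  {W | ↑W ⊆ FLpm Γ ∧ Consistent (conj W) ∧
    ∀ γ ∈ FLpm Γ, γ ∉ W → ¬ Consistent (conj (insert γ W))}

def CanState (Γ : Set Form) : Type := {W : Finset Form // W ∈ SStates Γ}

/-- The canonical PDL□-model. -/
noncomputable def canModel (Γ : Set Form) : ModelData (CanState Γ) where
  vf a := {W | Form.atom a ∈ W.1}
  vp p W₁ W₂ := Consistent ((conj W₁.1).and (Form.dia (Prog.atom p) (conj W₂.1)))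
  Rbox W₁ W₂ := Consistent ((conj W₁.1).and (Form.diam (conj W₂.1)))
/-- A formula is dynamic-modal free (dmff): it contains no `⟨π⟩`. -/
def DMFree : Form → Prop
  | Form.atom _ => True
  | Form.bot => True
  | Form.neg A => DMFree A
  | Form.or A B => DMFree A ∧ DMFree B
  | Form.dia _ _ => False
  | Form.nec A => DMFree A

/-- Program valuations on a state space `S`. -/
def Valu (S : Type) : Type := ℕ → S → S → Prop

/-- A valuation is compatible with `R` when every atomic program relation is contained in `R`. -/
def ValCompat {S : Type} (R : S → S → Prop) (v : Valu S) : Prop := ∀ p s t, v p s t → R s t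

/-- A PEDAL-model. -/
structure PModel (S : Type) where
  vf : ℕ → Set S
  Rbox : S → S → Prop
  equiv : Equivalence Rbox
  Part : Set (Set (Valu S))
  mu : Set (Valu S) → ℝ
  part_finite : Part.Finite
  part_val : ∀ P ∈ Part, ∀ v ∈ P, ValCompat Rbox v
  part_disj : ∀ P ∈ Part, ∀ Q ∈ Part, P ≠ Q → Disjoint P Q
  part_cover : ∀ v : Valu S, ValCompat Rbox v → ∃ P ∈ Part, v ∈ P
  mu_nonneg : ∀ P ∈ Part, 0 ≤ mu P
  mu_sum : ∑ᶠ P ∈ Part, mu P = 1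
  mu_supp : ∀ P ∈ Part, mu P ≠ 0 → P.Finite

/-- The PDL□-model `M(v)` obtained from a PEDAL-model by fixing a program valuation. -/
def PModel.toModel {S : Type} (M : PModel S) (v : Valu S) : ModelData S :=
  ⟨M.vf, v, M.Rbox⟩

/-- The measure on sets of valuations induced by spreading each cell's probability uniformly. -/
noncomputable def PModel.meas {S : Type} (M : PModel S) (X : Set (Valu S)) : ℝ :=
  ∑ᶠ P ∈ M.Part, M.mu P * (((P ∩ X).ncard : ℝ) / (P.ncard : ℝ))

/-- The set of (compatible) valuations making `γ` true at `s`, i.e. `Val^S_p(s,γ)`. -/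
def PModel.valSet {S : Type} (M : PModel S) (s : S) (γ : Form) : Set (Valu S) :=
  {v | ValCompat M.Rbox v ∧ Sat (M.toModel v) s γ}

/-- μ(s, γ): the induced probability of the ground formula γ at state s. -/
noncomputable def PModel.pr {S : Type} (M : PModel S) (s : S) (γ : Form) : ℝ :=
  M.meas (M.valSet s γ)

/-- The probabilistic language L₁. -/
inductive PForm : Type where
  | ge : Form → ℚ → PForm
  | neg : PForm → PForm
  | or : PForm → PForm → PForm
deriving DecidableEq

def PForm.impl (A B : PForm) : PForm := PForm.or (PForm.neg A) B
def PForm.and (A B : PForm) : PForm := PForm.neg (PForm.or (PForm.neg A) (PForm.neg B))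
def PForm.iff (A B : PForm) : PForm := (A.impl B).and (B.impl A)
/-- Pr(γ) < q := ¬ Pr(γ) ≥ q -/
def PForm.lt (γ : Form) (q : ℚ) : PForm := PForm.neg (PForm.ge γ q)
/-- Pr(γ) ≤ q := Pr(¬γ) ≥ 1 − q -/
def PForm.le (γ : Form) (q : ℚ) : PForm := PForm.ge (Form.neg γ) (1 - q)
/-- Pr(γ) = q := Pr(γ) ≥ q ∧ Pr(γ) ≤ q -/
def PForm.eq (γ : Form) (q : ℚ) : PForm := (PForm.ge γ q).and (PForm.le γ q)

def pbeval (v : PForm → Bool) : PForm → Bool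
  | PForm.neg A => ! pbeval v A
  | PForm.or A B => pbeval v A || pbeval v B
  | A => v A

def PTaut (A : PForm) : Prop := ∀ v, pbeval v A = true

/-- The PEDAL proof system (with the infinitary Archimedean rule `r3`). -/
inductive PProv : PForm → Prop where
  | taut {A : PForm} : PTaut A → PProv A
  | a2 {γ : Form} : PProv (PForm.ge γ 0)
  | a3 {γ : Form} : DMFree γ → PProv ((PForm.eq γ 1).or (PForm.eq γ 0))
  | a4 {γ : Form} {r₁ r₂ : ℚ} : 0 ≤ r₁ → r₂ ≤ 1 → r₁ < r₂ →
      PProv ((PForm.le γ r₁).impl (PForm.lt γ r₂))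
  | a5 {γ : Form} {r : ℚ} : 0 ≤ r → r ≤ 1 → PProv ((PForm.lt γ r).impl (PForm.le γ r))
  | a6 {γ₁ γ₂ : Form} {r₁ r₂ : ℚ} : 0 ≤ r₁ → r₁ ≤ 1 → 0 ≤ r₂ → r₂ ≤ 1 →
      PProv ((((PForm.ge γ₁ r₁).and (PForm.ge γ₂ r₂)).and (PForm.eq (γ₁.and γ₂) 0)).impl
        (PForm.ge (Form.or γ₁ γ₂) (min 1 (r₁ + r₂))))
  | a7 {γ₁ γ₂ : Form} {r₁ r₂ : ℚ} : 0 ≤ r₁ → 0 ≤ r₂ → r₁ + r₂ ≤ 1 →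
      PProv (((PForm.le γ₁ r₁).and (PForm.lt γ₂ r₂)).impl (PForm.lt (Form.or γ₁ γ₂) (r₁ + r₂)))
  | mp {A B : PForm} : PProv (A.impl B) → PProv A → PProv B
  | r2 {γ : Form} : PDLBoxProv γ → PProv (PForm.eq γ 1)
  | r3 {A : PForm} {γ : Form} {r : ℚ} : 0 < r → r ≤ 1 →
      (∀ k : ℕ, (1 : ℚ) / r ≤ (k : ℚ) → PProv (A.impl (PForm.ge γ (r - 1 / (k : ℚ))))) →
      PProv (A.impl (PForm.ge γ r))

/-- PEDAL semantics. -/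
def PSat {S : Type} (M : PModel S) (s : S) : PForm → Prop
  | PForm.ge γ q => (q : ℝ) ≤ M.pr s γ
  | PForm.neg A => ¬ PSat M s A
  | PForm.or A B => PSat M s A ∨ PSat M s B

/-- Big conjunction of a list of L₁-formulas. -/
def bigAndP : List PForm → PForm
  | [] => PForm.or (PForm.ge Form.bot 0) (PForm.neg (PForm.ge Form.bot 0))
  | [A] => A
  | A :: l => A.and (bigAndP l)

/-- Big disjunction of a list of ground formulas. -/
def bigOrF : List Form → Form
  | [] => Form.bot
  | [A] => A
  | A :: l => Form.or A (bigOrF l)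

/-- Two states are dmff-compatible when they contain exactly the same dmffs. -/
def DmffComp (W V : Finset Form) : Prop := ∀ γ : Form, DMFree γ → (γ ∈ W ↔ γ ∈ V)

/-- The model induced by a section σ of S(X). -/
noncomputable def secModel (X : Set Form) (σ : CanState X → CanState X) :
    ModelData (CanState X) where
  vf a := {W | Form.atom a ∈ W.1}
  vp p W₁ W₂ := Consistent ((conj (σ W₁).1).and (Form.dia (Prog.atom p) (conj (σ W₂).1)))
  Rbox W₁ W₂ := Consistent ((conj W₁.1).and (Form.diam (conj W₂.1)))


/-! If `□γ ∈ W` and `γ ∉ W'`, maximality of `W'` gives `W' ⊢ ¬γ`, so `◇W' ⊢ ◇¬γ`, which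
contradicts `W ⊢ □γ`. Conversely, if `□γ ∉ W` then maximality of `W` gives `W ⊢ ◇¬γ`, and `¬γ`
can be extended under the `◇` to a state `W'`, deciding the finitely many formulas of `FL±(Γ)`
one at a time: since `◇` distributes over `∨`, one of the two choices keeps `W ∧ ◇(¬γ ∧ W')`
consistent. Then `W ∧ ◇W'` is consistent while `γ ∉ W'`. -/

/-- Unlike `¬δ`, the complement of a member of `FL±(Γ)` stays in `FL±(Γ)`. -/
def Form.complement : Form → Form
  | Form.neg δ => δ
  | δ => Form.neg δ

theorem beval_complement (v : Form → Bool) (δ : Form) : beval v δ.complement = !beval v δ := by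
  cases δ <;> simp only [Form.complement, beval, Bool.not_not]

theorem complement_mem_FLpm {Γ : Set Form} {δ : Form} (h : δ ∈ FLpm Γ) :
    δ.complement ∈ FLpm Γ := by
  rcases h with h | ⟨ε, hε, rfl⟩
  · cases δ <;> first | exact Or.inl (FL.neg h) | exact Or.inr ⟨_, h, rfl⟩
  · exact Or.inl hε

theorem mem_FLpm_of_nec_mem_FLpm {Γ : Set Form} {γ : Form} (h : Form.nec γ ∈ FLpm Γ) :
    γ ∈ FLpm Γ := by
  rcases h with h | ⟨_, _, ⟨⟩⟩
  exact Or.inl (FL.nec h)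

namespace PDLBoxProv

variable {A B C X : Form}

theorem mp₂ (h : PDLBoxProv (A.impl (B.impl C))) (hA : PDLBoxProv A) (hB : PDLBoxProv B) :
    PDLBoxProv C :=
  (h.mp hA).mp hB

theorem impl_refl : PDLBoxProv (A.impl A) :=
  taut fun v => by simp only [Form.impl, beval]; cases beval v A <;> rfl

theorem trans (h₁ : PDLBoxProv (A.impl B)) (h₂ : PDLBoxProv (B.impl C)) :
    PDLBoxProv (A.impl C) :=
  mp₂ (taut fun v => by
    simp only [Form.impl, beval]
    cases beval v A <;> cases beval v B <;> cases beval v C <;> rfl) h₁ h₂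

theorem and_left : PDLBoxProv ((A.and B).impl A) :=
  taut fun v => by
    simp only [Form.impl, Form.and, beval]; cases beval v A <;> cases beval v B <;> rfl

theorem and_right : PDLBoxProv ((A.and B).impl B) :=
  taut fun v => by
    simp only [Form.impl, Form.and, beval]; cases beval v A <;> cases beval v B <;> rfl

theorem and_intro (h₁ : PDLBoxProv (X.impl A)) (h₂ : PDLBoxProv (X.impl B)) :
    PDLBoxProv (X.impl (A.and B)) :=
  mp₂ (taut fun v => by
    simp only [Form.impl, Form.and, beval]
    cases beval v X <;> cases beval v A <;> cases beval v B <;> rfl) h₁ h₂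

theorem or_elim (h₁ : PDLBoxProv (A.impl X)) (h₂ : PDLBoxProv (B.impl X)) :
    PDLBoxProv ((A.or B).impl X) :=
  mp₂ (taut fun v => by
    simp only [Form.impl, beval]
    cases beval v X <;> cases beval v A <;> cases beval v B <;> rfl) h₁ h₂

theorem impl_neg_of_and_impl_bot (h : PDLBoxProv ((A.and B).impl Form.bot)) :
    PDLBoxProv (B.impl A.neg) :=
  (taut fun v => by
    simp only [Form.impl, Form.and, beval]; cases beval v A <;> cases beval v B <;> rfl).mp h

theorem contrapose (h : PDLBoxProv (A.impl B)) : PDLBoxProv (B.neg.impl A.neg) :=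
  (taut fun v => by
    simp only [Form.impl, beval]; cases beval v A <;> cases beval v B <;> rfl).mp h

theorem impl_bot_of_impl_of_impl_neg (h₁ : PDLBoxProv (X.impl A))
    (h₂ : PDLBoxProv (X.impl A.neg)) : PDLBoxProv (X.impl Form.bot) :=
  mp₂ (taut fun v => by
    simp only [Form.impl, beval]; cases beval v X <;> cases beval v A <;> rfl) h₁ h₂

theorem and_impl_or_and (h : PDLBoxProv (A.impl (B.or C))) :
    PDLBoxProv ((X.and A).impl ((X.and B).or (X.and C))) :=
  (taut fun v => by
    simp only [Form.impl, Form.and, beval]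
    cases beval v X <;> cases beval v A <;> cases beval v B <;> cases beval v C <;> rfl).mp h

theorem nec_mono (h : PDLBoxProv (A.impl B)) : PDLBoxProv ((Form.nec A).impl (Form.nec B)) :=
  kbox.mp (necBox h)

theorem diam_mono (h : PDLBoxProv (A.impl B)) : PDLBoxProv ((Form.diam A).impl (Form.diam B)) :=
  contrapose (nec_mono (contrapose h))

theorem neg_nec_impl_diam_neg : PDLBoxProv ((Form.nec A).neg.impl (Form.diam A.neg)) :=
  contrapose (nec_mono (taut fun v => by
    simp only [Form.impl, beval]; cases beval v A <;> rfl))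

theorem diam_impl_bot (h : PDLBoxProv (A.impl Form.bot)) :
    PDLBoxProv ((Form.diam A).impl Form.bot) := by
  have hnA : PDLBoxProv A.neg :=
    (taut fun v => by simp only [Form.impl, beval]; cases beval v A <;> rfl).mp h
  exact (taut fun v => by
    simp only [Form.impl, Form.diam, beval]; cases v (Form.nec A.neg) <;> rfl).mp (necBox hnA)

theorem diam_or (h : PDLBoxProv (C.impl (A.or B))) :
    PDLBoxProv ((Form.diam C).impl ((Form.diam A).or (Form.diam B))) := by
  have hnA : PDLBoxProv ((Form.nec A.neg).impl (Form.nec (B.neg.impl C.neg))) :=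
    nec_mono ((taut fun v => by
      simp only [Form.impl, beval]
      cases beval v A <;> cases beval v B <;> cases beval v C <;> rfl).mp h)
  refine (taut fun v => ?_).mp (trans hnA kbox)
  simp only [Form.impl, Form.diam, beval]
  cases v (Form.nec A.neg) <;> cases v (Form.nec B.neg) <;> cases v (Form.nec C.neg) <;> rfl

theorem foldr_and_impl_of_mem {l : List Form} {δ : Form} (h : δ ∈ l) :
    PDLBoxProv ((l.foldr Form.and Form.top).impl δ) := by
  induction l with
  | nil => cases h
  | cons a l ih =>
    rcases List.mem_cons.mp h with rfl | h
    · exact and_left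
    · exact trans and_right (ih h)

theorem impl_foldr_and {l : List Form} (h : ∀ δ ∈ l, PDLBoxProv (X.impl δ)) :
    PDLBoxProv (X.impl (l.foldr Form.and Form.top)) := by
  induction l with
  | nil =>
    exact taut fun v => by
      simp only [List.foldr_nil, Form.impl, Form.top, beval]; cases beval v X <;> rfl
  | cons a l ih =>
    exact and_intro (h a List.mem_cons_self) (ih fun δ hδ => h δ (List.mem_cons_of_mem a hδ))

theorem conj_impl_of_mem {W : Finset Form} {δ : Form} (h : δ ∈ W) :
    PDLBoxProv ((conj W).impl δ) :=
  foldr_and_impl_of_mem (Finset.mem_toList.mpr h)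

theorem impl_conj {W : Finset Form} (h : ∀ δ ∈ W, PDLBoxProv (X.impl δ)) :
    PDLBoxProv (X.impl (conj W)) :=
  impl_foldr_and fun δ hδ => h δ (Finset.mem_toList.mp hδ)

theorem and_conj_impl_conj_insert (δ : Form) (V : Finset Form) :
    PDLBoxProv ((δ.and (conj V)).impl (conj (insert δ V))) :=
  impl_conj fun ε hε => by
    rcases Finset.mem_insert.mp hε with rfl | hε
    · exact and_left
    · exact trans and_right (conj_impl_of_mem hε)

theorem complement_impl_neg (δ : Form) : PDLBoxProv (δ.complement.impl δ.neg) :=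
  taut fun v => by simp only [Form.impl, beval, beval_complement]; cases beval v δ <;> rfl

theorem conj_impl_or_insert_complement (δ : Form) (V : Finset Form) :
    PDLBoxProv ((conj V).impl ((conj (insert δ V)).or (conj (insert δ.complement V)))) := by
  have hδ : PDLBoxProv (δ.or δ.complement) :=
    taut fun v => by simp only [beval, beval_complement]; cases beval v δ <;> rfl
  refine mp₂ ((taut fun v => ?_).mp hδ) (and_conj_impl_conj_insert δ V)
    (and_conj_impl_conj_insert δ.complement V)
  simp only [Form.impl, Form.and, beval]
  cases beval v δ <;> cases beval v δ.complement <;> cases beval v (conj V) <;>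
    cases beval v (conj (insert δ V)) <;> cases beval v (conj (insert δ.complement V)) <;> rfl

end PDLBoxProv

section Consistency

open PDLBoxProv

variable {A B C X : Form}

theorem Consistent.mono (h : PDLBoxProv (A.impl B)) (hA : Consistent A) : Consistent B :=
  fun hB => hA (trans h hB)

theorem Consistent.or_of_impl (hA : Consistent A) (h : PDLBoxProv (A.impl (B.or C))) :
    Consistent B ∨ Consistent C := by
  by_contra hBC
  rw [not_or] at hBC
  exact hA (trans h (or_elim (of_not_not hBC.1) (of_not_not hBC.2)))

theorem Consistent.of_and_diam (h : Consistent (X.and (Form.diam A))) : Consistent A :=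
  fun hA => h (trans and_right (diam_impl_bot hA))

theorem not_consistent_nec_and_diam (h : PDLBoxProv (B.impl A.neg)) :
    ¬ Consistent ((Form.nec A).and (Form.diam B)) := by
  have hAB : PDLBoxProv ((Form.nec A).impl (Form.nec B.neg)) :=
    nec_mono ((taut fun v => by
      simp only [Form.impl, beval]; cases beval v A <;> cases beval v B <;> rfl).mp h)
  refine not_not_intro ((taut fun v => ?_).mp hAB)
  simp only [Form.impl, Form.and, Form.diam, beval]
  cases v (Form.nec A) <;> cases v (Form.nec B.neg) <;> rfl

end Consistency

namespace SStates

open PDLBoxProv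

variable {Γ : Set Form} {W : Finset Form}

theorem impl_neg_of_not_mem (hW : W ∈ SStates Γ) {δ : Form} (hδ : δ ∈ FLpm Γ)
    (hδW : δ ∉ W) : PDLBoxProv ((conj W).impl δ.neg) :=
  impl_neg_of_and_impl_bot
    (trans (and_conj_impl_conj_insert δ W) (of_not_not (hW.2.2 δ hδ hδW)))

/-- A state contains `δ` or `¬δ` for every `δ ∈ FL(Γ)`, so `FL(Γ)` is covered by `W ∪ ¬⁻¹W`. -/
theorem finite_FLpm (hW : W ∈ SStates Γ) : (FLpm Γ).Finite := by
  have hdecide : ∀ δ, FL Γ δ → δ ∈ W ∨ Form.neg δ ∈ W := by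
    intro δ hδ
    by_contra hnone
    rw [not_or] at hnone
    exact hW.2.1 (impl_bot_of_impl_of_impl_neg (impl_neg_of_not_mem hW (Or.inl hδ) hnone.1)
      (impl_neg_of_not_mem hW (Or.inr ⟨δ, hδ, rfl⟩) hnone.2))
  have hFL : {δ | FL Γ δ}.Finite :=
    (W.finite_toSet.union (W.finite_toSet.preimage fun _ _ _ _ h => Form.neg.inj h)).subset
      hdecide
  exact hFL.union ((hFL.image Form.neg).subset fun _ ⟨δ, hδ, hγ⟩ => ⟨δ, hδ, hγ.symm⟩)

/-- Lindenbaum's lemma within `FL±(Γ)`: a maximal `V ⊆ FL±(Γ)` satisfying `P` is a state. -/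
theorem exists_mem_of_split (hfin : (FLpm Γ).Finite) (P : Finset Form → Prop) (h₀ : P ∅)
    (hsplit : ∀ V δ, P V → P (insert δ V) ∨ P (insert δ.complement V))
    (hcons : ∀ V, P V → Consistent (conj V)) : ∃ V ∈ SStates Γ, P V := by
  classical
  obtain ⟨V, hVmax⟩ := (hfin.toFinset.powerset.filter P).exists_maximal ⟨∅, by simpa using h₀⟩
  have hV : V ⊆ hfin.toFinset ∧ P V := by
    simpa only [Finset.mem_filter, Finset.mem_powerset] using hVmax.prop
  have hmax : ∀ δ ∈ FLpm Γ, P (insert δ V) → δ ∈ V := fun δ hδ hP =>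
    have hmem : insert δ V ∈ hfin.toFinset.powerset.filter P :=
      Finset.mem_filter.mpr
        ⟨Finset.mem_powerset.mpr (Finset.insert_subset (hfin.mem_toFinset.mpr hδ) hV.1), hP⟩
    hVmax.eq_of_ge hmem (Finset.subset_insert δ V) ▸ Finset.mem_insert_self δ V
  refine ⟨V, ⟨fun δ hδ => hfin.mem_toFinset.mp (hV.1 hδ), hcons V hV.2, ?_⟩, hV.2⟩
  intro δ hδ hδV hconsδ
  have hcompl : δ.complement ∈ V := hmax _ (complement_mem_FLpm hδ)
    ((hsplit V δ hV.2).resolve_left fun h => hδV (hmax δ hδ h))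
  exact hconsδ (impl_bot_of_impl_of_impl_neg (conj_impl_of_mem (Finset.mem_insert_self δ V))
    (trans (conj_impl_of_mem (Finset.mem_insert_of_mem hcompl)) (complement_impl_neg δ)))

theorem exists_mem_consistent_and_diam (hfin : (FLpm Γ).Finite) {X C : Form}
    (h : Consistent (X.and (Form.diam C))) :
    ∃ V ∈ SStates Γ, Consistent (X.and (Form.diam (C.and (conj V)))) := by
  refine exists_mem_of_split hfin _ (h.mono ?_) (fun V δ hV => hV.or_of_impl ?_)
    fun V hV => hV.of_and_diam.mono and_right
  · exact and_intro and_left (trans and_right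
      (diam_mono (and_intro impl_refl (impl_conj fun _ h => absurd h (Finset.notMem_empty _)))))
  · exact and_impl_or_and (diam_or (and_impl_or_and (conj_impl_or_insert_complement δ V)))

theorem mem_of_nec_mem {W' : Finset Form} {γ : Form} (hW' : W' ∈ SStates Γ)
    (hγ : γ ∈ FLpm Γ) (hnec : Form.nec γ ∈ W)
    (hcon : Consistent ((conj W).and (Form.diam (conj W')))) : γ ∈ W' := by
  by_contra hγW'
  refine not_consistent_nec_and_diam (impl_neg_of_not_mem hW' hγ hγW') (hcon.mono ?_)
  exact and_intro (trans and_left (conj_impl_of_mem hnec)) and_right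

theorem exists_consistent_diam_not_mem (hW : W ∈ SStates Γ) {γ : Form}
    (hnecΓ : Form.nec γ ∈ FLpm Γ) (hnec : Form.nec γ ∉ W) :
    ∃ W' ∈ SStates Γ, Consistent ((conj W).and (Form.diam (conj W'))) ∧ γ ∉ W' := by
  have hdiam : PDLBoxProv ((conj W).impl (Form.diam γ.neg)) :=
    trans (impl_neg_of_not_mem hW hnecΓ hnec) neg_nec_impl_diam_neg
  obtain ⟨V, hV, hcon⟩ :=
    exists_mem_consistent_and_diam (finite_FLpm hW) (hW.2.1.mono (and_intro impl_refl hdiam))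
  refine ⟨V, hV, hcon.mono (and_intro and_left (trans and_right (diam_mono and_right))),
    fun hγV => hcon.of_and_diam ?_⟩
  exact impl_bot_of_impl_of_impl_neg (trans and_right (conj_impl_of_mem hγV)) and_left

end SStates

/-- for W ∈ S(Γ), if □γ ∈ FL±(Γ) and □γ is consistent, then □γ ∈ W iff
    every W' ∈ S(Γ) with W ∧ ◇W' consistent contains γ. -/
theorem stmt5 (Γ : Set Form) (γ : Form) (W : CanState Γ)
    (h1 : Form.nec γ ∈ FLpm Γ) (h2 : Consistent (Form.nec γ)) :
    Form.nec γ ∈ W.1 ↔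
      ∀ W' : CanState Γ, Consistent ((conj W.1).and (Form.diam (conj W'.1))) → γ ∈ W'.1 := by
  constructor
  · intro hnec W' hcon
    exact SStates.mem_of_nec_mem W'.2 (mem_FLpm_of_nec_mem_FLpm h1) hnec hcon
  · intro h
    by_contra hnec
    obtain ⟨W', hW', hcon, hγ⟩ := SStates.exists_consistent_diam_not_mem W.2 h1 hnec
    exact hγ (h ⟨W', hW'⟩ hcon)

end PEDAL
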